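/- Let α* = 1 and u⁻ = u⁺ = ∅, so that colored linear orders are just linear orders and inc_J(I) is the set of strictly order-preserving maps from J to I. Let μ be an infinite cardinal, ζ* an ordinal with μ ≤ ζ* < μ⁺, and λ a cardinal with μ⁺ ≤ λ. Let J be the ordinal ζ* and I the ordinal product λ·ζ* (the order type of ζ* copies of λ), both regarded as linear orders. Then the pair (I,J) is a reasonable (μ,1)-base and a wide (λ,μ,1)-base. -/

import Mathlib

universe u

namespace Shelah734

/-- Membership in `inc_J(I)` for colored linear orders given by the colorings
`cJ`, `cI`, relative to the parameter sets `um = u⁻` and `up = u⁺`. -/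
def Inc {J : Type*} {I : Type*} [LinearOrder J] [LinearOrder I]
    (um up : Set Ordinal) (cJ : J → Ordinal) (cI : I → Ordinal)
    (h : J → I) : Prop :=
  StrictMono h ∧ (∀ t, cI (h t) = cJ t) ∧
    (∀ t, cJ t ∈ um → ∀ s, s < h t → ∃ t₁, t₁ < t ∧ s ≤ h t₁) ∧
    (∀ t, cJ t ∈ up → ∀ s, h t < s → ∃ t₁, t < t₁ ∧ h t₁ ≤ s)

/-- `e ∈ 𝐞(J)` : a partial equivalence relation all of whose classes are convex. -/
def ConvexPER {J : Type*} [LinearOrder J] (e : J → J → Prop) : Prop :=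
  (∀ s t, e s t → e t s) ∧ (∀ s t r, e s t → e t r → e s r) ∧
    (∀ s t r, e s t → s ≤ r → r ≤ t → e s r)

/-- The domain of a partial equivalence relation. -/
def eDom {J : Type*} (e : J → J → Prop) : Set J := {s | e s s}

/-- `Y` represents a subset of `Dom(e)/e` : an `e`-invariant subset of the domain. -/
def ClassSet {J : Type*} (e : J → J → Prop) (Y : Set J) : Prop :=
  Y ⊆ eDom e ∧ ∀ s t, e s t → (s ∈ Y ↔ t ∈ Y)

/-- `(h₁, h₂)` is a strict `(e, Y)`-pair (with `Y` an invariant subset of the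
domain representing a set `𝒴` of `e`-classes). -/
def StrictPair {J : Type*} {I : Type*} [LinearOrder J] [LinearOrder I]
    (e : J → J → Prop) (Y : Set J) (h₁ h₂ : J → I) : Prop :=
  (∀ s, ¬ e s s ↔ h₁ s = h₂ s) ∧
    (∀ s t, s < t → e s s → e t t → ¬ e s t → h₁ s < h₂ t ∧ h₂ s < h₁ t) ∧
    (∀ s t, s < t → e s t → ((h₁ t < h₂ s ↔ s ∈ Y) ∧ (s ∈ Y ↔ h₁ s < h₂ t)))

/-- `(h₁, h₂)` is an `e`-pair. -/
def EPair {J : Type*} {I : Type*} [LinearOrder J] [LinearOrder I]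
    (e : J → J → Prop) (h₁ h₂ : J → I) : Prop :=
  ∃ Y : Set J, ClassSet e Y ∧ StrictPair e Y h₁ h₂

/-- `e ∈ 𝐞(J, I)`. -/
def EJI {J : Type*} {I : Type*} [LinearOrder J] [LinearOrder I]
    (um up : Set Ordinal) (cJ : J → Ordinal) (cI : I → Ordinal)
    (e : J → J → Prop) : Prop :=
  ConvexPER e ∧
    ∃ h₁ h₂ : J → I, Inc um up cJ cI h₁ ∧ Inc um up cJ cI h₂ ∧ EPair e h₁ h₂

/-- The quantifier-free type of a tuple of members of `inc_J(I)` :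
`qftp(h₁, …, hₙ; I) = {(ℓ, m, s, t) : h_ℓ(s) <_I h_m(t)}`. -/
def qftp {J : Type*} {I : Type*} [LinearOrder I] {n : ℕ} (hs : Fin n → J → I) :
    Set (Fin n × Fin n × J × J) :=
  {q : Fin n × Fin n × J × J | hs q.1 q.2.2.1 < hs q.2.1 q.2.2.2}

/-- Restriction of a relation to a set. -/
def restrictE {J : Type*} (e : J → J → Prop) (S : Set J) : J → J → Prop :=
  fun s t => e s t ∧ s ∈ S ∧ t ∈ S

/-- `(I, J)` is a reasonable `(μ, α*)`-base. -/
def Reasonable {J : Type*} {I : Type*} [LinearOrder J] [LinearOrder I]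
    (um up : Set Ordinal) (cJ : J → Ordinal) (cI : I → Ordinal)
    (μ : Cardinal) : Prop :=
  Cardinal.mk J ≤ μ ∧ (∃ e : J → J → Prop, EJI um up cJ cI e) ∧
    ∀ e : J → J → Prop, EJI um up cJ cI e →
      ∀ h₁ h₂ : J → I, Inc um up cJ cI h₁ → Inc um up cJ cI h₂ →
        EPair e h₁ h₂ →
          ∃ h₁' h₂' h₃' : J → I, ∃ Y : Set J,
            Inc um up cJ cI h₁' ∧ Inc um up cJ cI h₂' ∧ Inc um up cJ cI h₃' ∧
            ClassSet e Y ∧ qftp ![h₁', h₂'] = qftp ![h₁, h₂] ∧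
            StrictPair e Y h₁' h₃' ∧ StrictPair e Y h₂' h₃'

/-- `(I, J)` is a wide `(λ, μ, α*)`-base. -/
def Wide {J : Type*} {I : Type*} [LinearOrder J] [LinearOrder I]
    (um up : Set Ordinal) (cJ : J → Ordinal) (cI : I → Ordinal)
    (lam μ : Cardinal) : Prop :=
  Cardinal.mk J ≤ μ ∧ (∃ e : J → J → Prop, EJI um up cJ cI e) ∧
    ∀ e : J → J → Prop, EJI um up cJ cI e →
      ∃ hs : lam.ord.ToType → J → I,
        (∀ ξ, Inc um up cJ cI (hs ξ)) ∧
          ∀ ξ ζ, ξ < ζ → EPair e (hs ξ) (hs ζ)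

/-- `E` is an invariant equivalence relation on `inc_J(I)`. -/
def InvariantER {J : Type*} {I : Type*} [LinearOrder J] [LinearOrder I]
    (um up : Set Ordinal) (cJ : J → Ordinal) (cI : I → Ordinal)
    (E : (J → I) → (J → I) → Prop) : Prop :=
  (∀ h, Inc um up cJ cI h → E h h) ∧
    (∀ h₁ h₂, Inc um up cJ cI h₁ → Inc um up cJ cI h₂ → E h₁ h₂ → E h₂ h₁) ∧
    (∀ h₁ h₂ h₃, Inc um up cJ cI h₁ → Inc um up cJ cI h₂ → Inc um up cJ cI h₃ →
      E h₁ h₂ → E h₂ h₃ → E h₁ h₃) ∧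
    (∀ h₁ h₂ h₃ h₄, Inc um up cJ cI h₁ → Inc um up cJ cI h₂ →
      Inc um up cJ cI h₃ → Inc um up cJ cI h₄ →
      qftp ![h₁, h₂] = qftp ![h₃, h₄] → (E h₁ h₂ ↔ E h₃ h₄))

/-- `E` is a non-trivial invariant equivalence relation. -/
def NonTrivialER {J : Type*} {I : Type*} [LinearOrder J] [LinearOrder I]
    (um up : Set Ordinal) (cJ : J → Ordinal) (cI : I → Ordinal)
    (E : (J → I) → (J → I) → Prop) : Prop :=
  (∀ h₁ h₂, Inc um up cJ cI h₁ → Inc um up cJ cI h₂ →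
      ({t : J | h₁ t = h₂ t}ᶜ).Finite → E h₁ h₂) ∧
    ∃ h₁ h₂, Inc um up cJ cI h₁ ∧ Inc um up cJ cI h₂ ∧ ¬ E h₁ h₂

/-- `u ∈ 𝒟_ℰ`. -/
def DEMem {J : Type*} {I : Type*} [LinearOrder J] [LinearOrder I]
    (um up : Set Ordinal) (cJ : J → Ordinal) (cI : I → Ordinal)
    (E : (J → I) → (J → I) → Prop) (u : Set J) : Prop :=
  ∀ h₁ h₂, Inc um up cJ cI h₁ → Inc um up cJ cI h₂ →
    (∀ t ∈ u, h₁ t = h₂ t) → E h₁ h₂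

/-- The subset of `Dom(e)/e` represented by the invariant set `Y` belongs to
`𝒟_{ℰ,e}`. -/
def DEeMem {J : Type*} {I : Type*} [LinearOrder J] [LinearOrder I]
    (um up : Set Ordinal) (cJ : J → Ordinal) (cI : I → Ordinal)
    (E : (J → I) → (J → I) → Prop) (e : J → J → Prop) (Y : Set J) : Prop :=
  ClassSet e Y ∧
    ∀ h₁ h₂, Inc um up cJ cI h₁ → Inc um up cJ cI h₂ →
      EPair (restrictE e (eDom e \ Y)) h₁ h₂ → E h₁ h₂

/-- `I₁ ≤¹_J I₂`, where `I₁` is the suborder of `I₂` on the subset `A`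
(with the induced order and coloring). -/
def Le1 {J : Type*} {I : Type*} [LinearOrder J] [LinearOrder I]
    (um up : Set Ordinal) (cJ : J → Ordinal) (cI : I → Ordinal)
    (A : Set I) : Prop :=
  ∀ h₁ h₂ h₃ : J → I,
    Inc um up cJ cI h₁ → Inc um up cJ cI h₂ → Inc um up cJ cI h₃ →
      ∃ h₁' h₂' h₃' : J → ↥A,
        Inc um up cJ (fun a : ↥A => cI ↑a) h₁' ∧
        Inc um up cJ (fun a : ↥A => cI ↑a) h₂' ∧
        Inc um up cJ (fun a : ↥A => cI ↑a) h₃' ∧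
        qftp ![h₁', h₂', h₃'] = qftp ![h₁, h₂, h₃]

/-!
Both bases are witnessed by explicit maps into lexicographic products, which embed into
`I = λ·ζ*` because `α * λ = λ` for every ordinal `0 < α < λ`, `λ` being an infinite cardinal.

Wideness: the `ξ`-th map sends a point `t` of an `e`-class with least element `m` to
`(m, ξ, t) ∈ J ×ₗ (λ ×ₗ J)` and a point `t` outside `Dom e` to `(t, ξ₀, t)` for a fixed `ξ₀`.

Reasonableness: replacing `hᵢ` by `t ↦ (hᵢ t, ⊤) ∈ I ×ₗ WithTop J` keeps the type of the pair and
leaves a copy of `J` just below every point. The third map sends the class of `m` into the copy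
below `min (h₁ m) (h₂ m)`: since `(h₁, h₂)` is an `e`-pair, both maps send all earlier points
below this point and the whole class above it.
-/

open Cardinal Ordinal

section ClassMin

variable {J : Type*} [LinearOrder J] {e : J → J → Prop} {s t : J}

theorem ConvexPER.symm (he : ConvexPER e) (h : e s t) : e t s := he.1 _ _ h

theorem ConvexPER.trans {r : J} (he : ConvexPER e) (h : e s t) (h' : e t r) : e s r :=
  he.2.1 _ _ _ h h'

theorem ConvexPER.refl_left (he : ConvexPER e) (h : e s t) : e s s := he.trans h (he.symm h)

theorem ConvexPER.refl_right (he : ConvexPER e) (h : e s t) : e t t := he.trans (he.symm h) h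

variable [WellFoundedLT J]

open Classical in
noncomputable def classMin (e : J → J → Prop) (t : J) : J :=
  if h : e t t then wellFounded_lt.min {s | e s t} ⟨t, h⟩ else t

theorem classMin_rel (ht : e t t) : e (classMin e t) t := by
  rw [classMin, dif_pos ht]
  exact wellFounded_lt.min_mem {s | e s t} _

theorem ConvexPER.classMin_le (he : ConvexPER e) (h : e s t) : classMin e t ≤ s := by
  rw [classMin, dif_pos (he.refl_right h)]
  exact wellFounded_lt.min_le (show s ∈ {s | e s t} from h)

theorem ConvexPER.classMin_congr (he : ConvexPER e) (h : e s t) :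
    classMin e s = classMin e t :=
  le_antisymm (he.classMin_le (he.trans (classMin_rel (he.refl_right h)) (he.symm h)))
    (he.classMin_le (he.trans (classMin_rel (he.refl_left h)) h))

theorem ConvexPER.lt_classMin (he : ConvexPER e) (ht : e t t) (hst : s < t) (hn : ¬ e s t) :
    s < classMin e t := by
  by_contra! hle
  exact hn (he.trans (he.symm (he.2.2 _ _ _ (classMin_rel ht) hle hst.le)) (classMin_rel ht))

theorem ConvexPER.classMin_lt_classMin (he : ConvexPER e) (hs : e s s) (ht : e t t) (hst : s < t)
    (hn : ¬ e s t) : classMin e s < classMin e t :=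
  (he.classMin_le hs).trans_lt (he.lt_classMin ht hst hn)

end ClassMin

section Transport

variable {J I K : Type*} [LinearOrder I] [LinearOrder K]

theorem qftp_comp (Φ : K ↪o I) {n : ℕ} (hs : Fin n → J → K) :
    qftp (fun i => Φ ∘ hs i) = qftp hs := by
  ext
  simp [qftp]

theorem qftp_pair_comp (Φ : K ↪o I) (h₁ h₂ : J → K) :
    qftp ![Φ ∘ h₁, Φ ∘ h₂] = qftp ![h₁, h₂] := by
  rw [← qftp_comp Φ]
  congr! 2 with i
  fin_cases i <;> rfl

variable [LinearOrder J]

theorem inc_empty_iff_strictMono (c : Ordinal) {h : J → I} :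
    Inc ∅ ∅ (fun _ => c) (fun _ => c) h ↔ StrictMono h :=
  ⟨fun hi => hi.1, fun hm => ⟨hm, fun _ => rfl, fun _ h => h.elim, fun _ h => h.elim⟩⟩

theorem strictPair_comp_iff (Φ : K ↪o I) {e : J → J → Prop} {Y : Set J} {h₁ h₂ : J → K} :
    StrictPair e Y (Φ ∘ h₁) (Φ ∘ h₂) ↔ StrictPair e Y h₁ h₂ := by
  simp only [StrictPair, Function.comp_apply, Φ.lt_iff_lt, Φ.eq_iff_eq]

theorem ePair_comp_iff (Φ : K ↪o I) {e : J → J → Prop} {h₁ h₂ : J → K} :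
    EPair e (Φ ∘ h₁) (Φ ∘ h₂) ↔ EPair e h₁ h₂ := by
  simp only [EPair, strictPair_comp_iff]

theorem ejI_emptyRelation (c : Ordinal) (ι : J ↪o I) :
    EJI ∅ ∅ (fun _ => c) (fun _ : I => c) (@emptyRelation J) :=
  ⟨⟨fun _ _ => id, fun _ _ _ h _ => h, fun _ _ _ h _ _ => h⟩, ι, ι,
    (inc_empty_iff_strictMono c).2 ι.strictMono, (inc_empty_iff_strictMono c).2 ι.strictMono,
    ∅, ⟨Set.empty_subset _, fun _ _ h => h.elim⟩,
    fun _ => ⟨fun _ => rfl, fun _ h => h⟩, fun _ _ _ h => h.elim, fun _ _ _ h => h.elim⟩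

end Transport

section GapMap

variable {J I : Type*} [LinearOrder J] [LinearOrder I]

def toLexTop : I ↪o I ×ₗ WithTop J :=
  OrderEmbedding.ofStrictMono (fun y => toLex (y, ⊤))
    fun _ _ h => Prod.Lex.toLex_lt_toLex.2 (Or.inl h)

@[simp]
theorem toLexTop_apply (y : I) : (toLexTop y : I ×ₗ WithTop J) = toLex (y, ⊤) := rfl

variable [WellFoundedLT J] {e : J → J → Prop} {h₁ h₂ : J → I} {s t x : J}

noncomputable def gapPoint (e : J → J → Prop) (h₁ h₂ : J → I) (t : J) : I :=
  min (h₁ (classMin e t)) (h₂ (classMin e t))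

open Classical in
noncomputable def gapMap (e : J → J → Prop) (h₁ h₂ : J → I) (t : J) : I ×ₗ WithTop J :=
  if e t t then toLex (gapPoint e h₁ h₂ t, (t : WithTop J)) else toLex (h₁ t, ⊤)

theorem ConvexPER.gapPoint_congr (he : ConvexPER e) (h : e s t) :
    gapPoint e h₁ h₂ s = gapPoint e h₁ h₂ t := by
  rw [gapPoint, gapPoint, he.classMin_congr h]

theorem ConvexPER.gapPoint_le (he : ConvexPER e) (hm₁ : StrictMono h₁) (hm₂ : StrictMono h₂)
    (hs : e s s) (hsx : s ≤ x) : gapPoint e h₁ h₂ s ≤ h₁ x ∧ gapPoint e h₁ h₂ s ≤ h₂ x :=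
  have hmx : classMin e s ≤ x := (he.classMin_le hs).trans hsx
  ⟨min_le_of_left_le (hm₁.monotone hmx), min_le_of_right_le (hm₂.monotone hmx)⟩

theorem ConvexPER.lt_gapPoint (he : ConvexPER e) (hm₁ : StrictMono h₁) (hm₂ : StrictMono h₂)
    (hp : EPair e h₁ h₂) (ht : e t t) (hst : s < t) (hn : ¬ e s t) :
    h₁ s < gapPoint e h₁ h₂ t ∧ h₂ s < gapPoint e h₁ h₂ t := by
  obtain ⟨-, -, hfix, hsep, -⟩ := hp
  have hsm : s < classMin e t := he.lt_classMin ht hst hn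
  by_cases hs : e s s
  · have hnm : ¬ e s (classMin e t) := fun h => hn (he.trans h (classMin_rel ht))
    obtain ⟨h₁₂, h₂₁⟩ := hsep s _ hsm hs (he.refl_left (classMin_rel ht)) hnm
    exact ⟨lt_min (hm₁ hsm) h₁₂, lt_min h₂₁ (hm₂ hsm)⟩
  · have heq : h₁ s = h₂ s := (hfix s).1 hs
    exact ⟨lt_min (hm₁ hsm) (heq ▸ hm₂ hsm), lt_min (heq ▸ hm₁ hsm) (hm₂ hsm)⟩

theorem ConvexPER.gapMap_strictMono (he : ConvexPER e) (hm₁ : StrictMono h₁)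
    (hm₂ : StrictMono h₂) (hp : EPair e h₁ h₂) : StrictMono (gapMap e h₁ h₂) := by
  intro s t hst
  by_cases hs : e s s <;> by_cases ht : e t t <;>
    simp only [gapMap, hs, ht, if_true, if_false, Prod.Lex.toLex_lt_toLex]
  · by_cases hn : e s t
    · exact Or.inr ⟨he.gapPoint_congr hn, WithTop.coe_lt_coe.2 hst⟩
    · exact Or.inl (((he.gapPoint_le hm₁ hm₂ hs le_rfl).1).trans_lt
        (he.lt_gapPoint hm₁ hm₂ hp ht hst hn).1)
  · exact (((he.gapPoint_le hm₁ hm₂ hs hst.le).1).lt_or_eq).imp id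
      fun h => ⟨h, WithTop.coe_lt_top _⟩
  · exact Or.inl (he.lt_gapPoint hm₁ hm₂ hp ht hst fun h => hs (he.refl_left h)).1
  · exact Or.inl (hm₁ hst)

theorem gapMap_lt_toLexTop_iff (hs : e s s) {y : I} :
    gapMap e h₁ h₂ s < toLexTop y ↔ gapPoint e h₁ h₂ s ≤ y := by
  simp [gapMap, hs, Prod.Lex.toLex_lt_toLex, le_iff_lt_or_eq]

theorem toLexTop_lt_gapMap_iff (ht : e t t) {y : I} :
    toLexTop y < gapMap e h₁ h₂ t ↔ y < gapPoint e h₁ h₂ t := by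
  simp [gapMap, ht, Prod.Lex.toLex_lt_toLex]

theorem ConvexPER.strictPair_gapMap (he : ConvexPER e) (hm₁ : StrictMono h₁)
    (hm₂ : StrictMono h₂) (hp : EPair e h₁ h₂) {g : J → I} (hg : g = h₁ ∨ g = h₂) :
    StrictPair e ∅ (toLexTop ∘ g) (gapMap e h₁ h₂) := by
  have hg_fix : ∀ u, ¬ e u u → g u = h₁ u := by
    obtain ⟨-, -, hfix, -⟩ := hp
    rcases hg with rfl | rfl
    exacts [fun _ _ => rfl, fun u hu => ((hfix u).1 hu).symm]
  have hg_lt : ∀ {s t}, s < t → e t t → ¬ e s t → g s < gapPoint e h₁ h₂ t := by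
    rcases hg with rfl | rfl
    exacts [fun hst ht hn => (he.lt_gapPoint hm₁ hm₂ hp ht hst hn).1,
      fun hst ht hn => (he.lt_gapPoint hm₁ hm₂ hp ht hst hn).2]
  have hg_ge : ∀ {s x}, e s s → s ≤ x → gapPoint e h₁ h₂ s ≤ g x := by
    rcases hg with rfl | rfl
    exacts [fun hs hsx => (he.gapPoint_le hm₁ hm₂ hs hsx).1,
      fun hs hsx => (he.gapPoint_le hm₁ hm₂ hs hsx).2]
  refine ⟨fun s => ?_, fun s t hst hs ht hn => ?_, fun s t hst hst' => ?_⟩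
  · by_cases hs : e s s <;> simp [gapMap, hs, hg_fix]
  · exact ⟨(toLexTop_lt_gapMap_iff ht).2 (hg_lt hst ht hn),
      (gapMap_lt_toLexTop_iff hs).2 (hg_ge hs hst.le)⟩
  · have hs := he.refl_left hst'
    refine ⟨iff_of_false (not_lt.2 ((gapMap_lt_toLexTop_iff hs).2 (hg_ge hs hst.le)).le) id,
      iff_of_false id (not_lt.2 ((gapMap_lt_toLexTop_iff (he.refl_right hst')).2 ?_).le)⟩
    exact (he.gapPoint_congr hst').symm.trans_le (hg_ge hs le_rfl)

end GapMap

section ClassFamily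

variable {J L : Type*} [LinearOrder J] [WellFoundedLT J] [LinearOrder L] {e : J → J → Prop}

open Classical in
noncomputable def classFamily (e : J → J → Prop) (x₀ ξ : L) (t : J) : J ×ₗ (L ×ₗ J) :=
  if e t t then toLex (classMin e t, toLex (ξ, t)) else toLex (t, toLex (x₀, t))

theorem ConvexPER.classFamily_strictMono (he : ConvexPER e) (x₀ ξ : L) :
    StrictMono (classFamily e x₀ ξ) := by
  intro s t hst
  by_cases hs : e s s <;> by_cases ht : e t t <;>
    simp only [classFamily, hs, ht, if_true, if_false, Prod.Lex.toLex_lt_toLex]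
  · by_cases hn : e s t
    · simp [he.classMin_congr hn, hst]
    · exact Or.inl (he.classMin_lt_classMin hs ht hst hn)
  · exact Or.inl ((he.classMin_le hs).trans_lt hst)
  · exact Or.inl (he.lt_classMin ht hst fun h => hs (he.refl_left h))
  · exact Or.inl hst

theorem ConvexPER.ePair_classFamily (he : ConvexPER e) (x₀ : L) {ξ ζ : L} (hξζ : ξ < ζ) :
    EPair e (classFamily e x₀ ξ) (classFamily e x₀ ζ) := by
  refine ⟨eDom e, ⟨subset_rfl, fun s t h => ⟨fun _ => he.refl_right h, fun _ => he.refl_left h⟩⟩,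
    fun s => ?_, fun s t hst hs ht hn => ?_, fun s t _ h => ?_⟩
  · by_cases hs : e s s <;> simp [classFamily, hs, hξζ.ne]
  · have hm := he.classMin_lt_classMin hs ht hst hn
    simp only [classFamily, hs, ht, if_true, Prod.Lex.toLex_lt_toLex]
    exact ⟨Or.inl hm, Or.inl hm⟩
  · have hs := he.refl_left h
    simp only [classFamily, hs, he.refl_right h, if_true, Prod.Lex.toLex_lt_toLex,
      he.classMin_congr h]
    simp [hξζ, eDom, hs]

end ClassFamily

section Bases

variable {J I : Type*} [LinearOrder J] [WellFoundedLT J] [LinearOrder I]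

theorem reasonable_of_orderEmbedding {μ : Cardinal} (hJ : #J ≤ μ) (ι : J ↪o I)
    (Φ : I ×ₗ WithTop J ↪o I) (c : Ordinal) :
    Reasonable ∅ ∅ (fun _ : J => c) (fun _ : I => c) μ := by
  refine ⟨hJ, ⟨_, ejI_emptyRelation c ι⟩, ?_⟩
  rintro e ⟨he, -⟩ h₁ h₂ hi₁ hi₂ hp
  simp only [inc_empty_iff_strictMono] at hi₁ hi₂ ⊢
  refine ⟨Φ ∘ (toLexTop ∘ h₁), Φ ∘ (toLexTop ∘ h₂), Φ ∘ gapMap e h₁ h₂, ∅,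
    Φ.strictMono.comp ((toLexTop (J := J)).strictMono.comp hi₁),
    Φ.strictMono.comp ((toLexTop (J := J)).strictMono.comp hi₂),
    Φ.strictMono.comp (he.gapMap_strictMono hi₁ hi₂ hp),
    ⟨Set.empty_subset _, fun _ _ _ => Iff.rfl⟩, ?_, ?_, ?_⟩
  · rw [qftp_pair_comp, qftp_pair_comp]
  · exact (strictPair_comp_iff Φ).2 (he.strictPair_gapMap hi₁ hi₂ hp (Or.inl rfl))
  · exact (strictPair_comp_iff Φ).2 (he.strictPair_gapMap hi₁ hi₂ hp (Or.inr rfl))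

theorem wide_of_orderEmbedding {μ lam : Cardinal} (hJ : #J ≤ μ) (ι : J ↪o I)
    (x₀ : lam.ord.ToType) (Φ : J ×ₗ (lam.ord.ToType ×ₗ J) ↪o I) (c : Ordinal) :
    Wide ∅ ∅ (fun _ : J => c) (fun _ : I => c) lam μ := by
  refine ⟨hJ, ⟨_, ejI_emptyRelation c ι⟩, fun e ⟨he, _⟩ => ⟨fun ξ => Φ ∘ classFamily e x₀ ξ,
    fun ξ => (inc_empty_iff_strictMono c).2 (Φ.strictMono.comp (he.classFamily_strictMono x₀ ξ)),
    fun ξ ζ hξζ => (ePair_comp_iff Φ).2 (he.ePair_classFamily x₀ hξζ)⟩⟩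

end Bases

section OrderTypes

theorem nonempty_orderEmbedding_of_typeLT_le {α β : Type u} [LinearOrder α] [WellFoundedLT α]
    [LinearOrder β] [WellFoundedLT β] (h : typeLT α ≤ typeLT β) : Nonempty (α ↪o β) :=
  (type_le_iff'.1 h).map RelEmbedding.orderEmbeddingOfLTEmbedding

theorem typeLT_mul_ord {α : Type u} [LinearOrder α] [WellFoundedLT α] [Nonempty α]
    {κ : Cardinal.{u}} (hκ : ℵ₀ ≤ κ) (hα : #α < κ) : (typeLT α) * κ.ord = κ.ord :=
  isPrincipal_mul_iff_mul_left_eq.1 (isPrincipal_mul_ord hκ) _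
    (pos_iff_ne_zero.2 (type_ne_zero_of_nonempty _)) (by rwa [lt_ord, card_type])

variable {κ : Cardinal.{u}} {o : Ordinal.{u}}

theorem nonempty_lex_withTop_orderEmbedding (hκ : ℵ₀ ≤ κ) (ho : o.card < κ) :
    Nonempty ((κ.ord * o).ToType ×ₗ WithTop o.ToType ↪o (κ.ord * o).ToType) := by
  have hlt : #(WithTop o.ToType) < κ := by
    rw [WithTop, mk_option, mk_toType]
    exact add_lt_of_lt hκ ho (one_lt_aleph0.trans_le hκ)
  apply nonempty_orderEmbedding_of_typeLT_le
  show (typeLT (WithTop o.ToType)) * (typeLT (κ.ord * o).ToType) ≤ _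
  rw [type_toType, ← mul_assoc, typeLT_mul_ord hκ hlt]

theorem nonempty_lex_lex_orderEmbedding (hκ : ℵ₀ ≤ κ) (ho : o.card < κ) :
    Nonempty (o.ToType ×ₗ (κ.ord.ToType ×ₗ o.ToType) ↪o (κ.ord * o).ToType) := by
  apply nonempty_orderEmbedding_of_typeLT_le
  show ((typeLT o.ToType) * (typeLT κ.ord.ToType)) * (typeLT o.ToType) ≤ _
  rcases eq_or_ne o 0 with rfl | ho₀
  · simp
  have := nonempty_toType_iff.2 ho₀
  rw [type_toType κ.ord, typeLT_mul_ord hκ (by rwa [mk_toType]), type_toType, type_toType]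

end OrderTypes

theorem stmt8_general (μ : Cardinal.{u}) (hμ : Cardinal.aleph0 ≤ μ)
    (ζs : Ordinal.{u}) (hζ2 : ζs < (Order.succ μ).ord)
    (lam : Cardinal.{u}) (hlam : Order.succ μ ≤ lam) :
    Reasonable (J := ζs.ToType) (I := (lam.ord * ζs).ToType)
      (∅ : Set Ordinal) (∅ : Set Ordinal) (fun _ => 0) (fun _ => 0) μ ∧
    Wide (J := ζs.ToType) (I := (lam.ord * ζs).ToType)
      (∅ : Set Ordinal) (∅ : Set Ordinal) (fun _ => 0) (fun _ => 0) lam μ := by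
  have hlam₀ : ℵ₀ ≤ lam := hμ.trans ((Order.le_succ μ).trans hlam)
  have hζμ : ζs.card ≤ μ := Order.lt_succ_iff.1 (lt_ord.1 hζ2)
  have hζlam : ζs.card < lam := hζμ.trans_lt ((Order.lt_succ μ).trans_le hlam)
  have hJ : #ζs.ToType ≤ μ := by rwa [mk_toType]
  have hlam_pos : 0 < lam.ord := ord_pos.2 (aleph0_pos.trans_le hlam₀)
  obtain ⟨x₀⟩ : Nonempty lam.ord.ToType := nonempty_toType_iff.2 hlam_pos.ne'
  obtain ⟨ι⟩ := nonempty_orderEmbedding_of_typeLT_le (α := ζs.ToType)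
    (β := (lam.ord * ζs).ToType) (by simpa using le_mul_right ζs hlam_pos)
  obtain ⟨Φ⟩ := nonempty_lex_withTop_orderEmbedding hlam₀ hζlam
  obtain ⟨Ψ⟩ := nonempty_lex_lex_orderEmbedding hlam₀ hζlam
  exact ⟨reasonable_of_orderEmbedding hJ ι Φ 0,
    wide_of_orderEmbedding hJ ι x₀ Ψ 0⟩

theorem stmt8 (μ : Cardinal.{u}) (hμ : Cardinal.aleph0 ≤ μ)
    (ζs : Ordinal.{u}) (hζ1 : μ.ord ≤ ζs) (hζ2 : ζs < (Order.succ μ).ord)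
    (lam : Cardinal.{u}) (hlam : Order.succ μ ≤ lam) :
    Reasonable (J := ζs.ToType) (I := (lam.ord * ζs).ToType)
      (∅ : Set Ordinal) (∅ : Set Ordinal) (fun _ => 0) (fun _ => 0) μ ∧
    Wide (J := ζs.ToType) (I := (lam.ord * ζs).ToType)
      (∅ : Set Ordinal) (∅ : Set Ordinal) (fun _ => 0) (fun _ => 0) lam μ :=
  stmt8_general μ hμ ζs hζ2 lam hlam

end Shelah734
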